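/- (Cylindrical fundamental solutions are dominative p-harmonic.) Let n ≥ 2 and 2 ≤ p ≤ ∞, and let u(x) = C₁·w_{k,p}(Qᵀ(x−x₀)) + C₂ be a cylindrical fundamental solution (C₁ ≥ 0, C₂ ∈ ℝ, 1 ≤ k ≤ n, Q an n×k real matrix with QᵀQ = I_k, x₀ ∈ ℝⁿ). Then at every point x with Qᵀ(x−x₀) ≠ 0 one has D_p u(x) = 0 and Δ_p u(x) = 0. -/

import Mathlib

open scoped ENNReal
open Filter Matrix

noncomputable section

/-- Hessian matrix of `u` at `x` (entries are second partial derivatives). -/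
def hess {n : ℕ} (u : EuclideanSpace ℝ (Fin n) → ℝ) (x : EuclideanSpace ℝ (Fin n)) :
    Matrix (Fin n) (Fin n) ℝ :=
  Matrix.of fun i j =>
    iteratedFDeriv ℝ 2 u x ![EuclideanSpace.single i 1, EuclideanSpace.single j 1]

/-- Laplacian: trace of the Hessian. -/
def lapl {n : ℕ} (u : EuclideanSpace ℝ (Fin n) → ℝ) (x : EuclideanSpace ℝ (Fin n)) : ℝ :=
  ∑ i, hess u x i i

/-- Quadratic form `zᵀ A z`. -/
def quadForm {n : ℕ} (A : Matrix (Fin n) (Fin n) ℝ) (z : EuclideanSpace ℝ (Fin n)) : ℝ :=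
  ∑ i, ∑ j, z i * A i j * z j

/-- Largest eigenvalue of a (symmetric) matrix: the max of `zᵀAz` over unit vectors `z`. -/
def lamMax {n : ℕ} (A : Matrix (Fin n) (Fin n) ℝ) : ℝ :=
  sSup {r : ℝ | ∃ z : EuclideanSpace ℝ (Fin n), ‖z‖ = 1 ∧ r = quadForm A z}

open Classical in
/-- Dominative p-Laplacian `D_p u(x)`, for `2 ≤ p ≤ ∞`. -/
def Dop {n : ℕ} (p : ℝ≥0∞) (u : EuclideanSpace ℝ (Fin n) → ℝ)
    (x : EuclideanSpace ℝ (Fin n)) : ℝ :=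
  if p = ⊤ then lamMax (hess u x)
  else (p.toReal - 2) * lamMax (hess u x) + lapl u x

open Classical in
/-- p-Laplacian `Δ_p u(x)` (the `∞`-Laplacian `∇u H u ∇uᵀ` for `p = ∞`).
For finite `p`, `Δ_p u = |∇u|^{p-2} Δu + (p-2)|∇u|^{p-4} ∇u Hu ∇uᵀ` with real powers,
which is automatically `0` at critical points when `p > 2` and `Δu` when `p = 2`. -/
def DeltaOp {n : ℕ} (p : ℝ≥0∞) (u : EuclideanSpace ℝ (Fin n) → ℝ)
    (x : EuclideanSpace ℝ (Fin n)) : ℝ :=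
  if p = ⊤ then quadForm (hess u x) (gradient u x)
  else ‖gradient u x‖ ^ (p.toReal - 2) * lapl u x
    + (p.toReal - 2) * ‖gradient u x‖ ^ (p.toReal - 4) * quadForm (hess u x) (gradient u x)

open Classical in
/-- Radial profile `W_{k,p}` of the fundamental solution of the p-Laplace equation in ℝᵏ. -/
def Wfun (p : ℝ≥0∞) (k : ℕ) (r : ℝ) : ℝ :=
  if p = ⊤ ∨ k = 1 then -r
  else if p.toReal = k then -Real.log r
  else -((p.toReal - 1) / (p.toReal - k)) * r ^ ((p.toReal - k) / (p.toReal - 1))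

/-- Euclidean norm of a plain vector in `Fin k → ℝ`. -/
def enorm' {k : ℕ} (v : Fin k → ℝ) : ℝ := Real.sqrt (∑ i, v i ^ 2)

/-- `u : Ω → (-∞,∞]` is a viscosity supersolution of `G(∇u, Hu) = 0` on `Ω`:
lower semicontinuous, `> -∞`, finite on a dense subset of `Ω`, and every `C²`
test function `φ` touching `u` from below at `x₀ ∈ Ω` satisfies `G φ x₀ ≤ 0`. -/
def ViscSupersol {n : ℕ}
    (G : (EuclideanSpace ℝ (Fin n) → ℝ) → EuclideanSpace ℝ (Fin n) → ℝ)
    (Ω : Set (EuclideanSpace ℝ (Fin n))) (u : EuclideanSpace ℝ (Fin n) → EReal) : Prop :=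
  LowerSemicontinuousOn u Ω ∧
  (∀ x ∈ Ω, u x ≠ ⊥) ∧
  Ω ⊆ closure {x | x ∈ Ω ∧ u x ≠ ⊤} ∧
  ∀ x₀ ∈ Ω, ∀ φ : EuclideanSpace ℝ (Fin n) → ℝ,
    ContDiffAt ℝ 2 φ x₀ → (φ x₀ : EReal) = u x₀ →
    (∀ᶠ x in nhdsWithin x₀ Ω, (φ x : EReal) ≤ u x) → G φ x₀ ≤ 0

open Classical in
/-- EReal-valued fundamental solution `w_{m,p}` on ℝᵐ, equal to `⊤` at the pole when `p ≤ m`,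
`p ≠ ∞`. -/
def wEReal (p : ℝ≥0∞) (m : ℕ) (x : EuclideanSpace ℝ (Fin m)) : EReal :=
  if x = 0 ∧ p ≤ (m : ℝ≥0∞) ∧ p ≠ ⊤ then (⊤ : EReal)
  else ((Wfun p m ‖x‖ : ℝ) : EReal)

end

/-!
With `y = Qᵀ(x - x₀)` and `s = |y|²`, the solution is `u = g(s)` with
`g'(s) = -(C₁/2) s^(β-1)`, where `β = (p - k)/(2(p - 1))` (and `β = 1/2` for `p = ∞`).
Its Hessian is `C₁ s^(β-1) (2(1-β) ŵ ŵᵀ - QQᵀ)`, where `ŵ = Qy/|y|` is the unit vector along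
`∇u` and `QQᵀ` is the orthogonal projection onto a `k`-dimensional subspace containing `ŵ`.
So the largest eigenvalue is `C₁ s^(β-1)(1 - 2β)`, attained at `ŵ`, and the trace is
`C₁ s^(β-1)(2(1-β) - k)`; the choice of `β` makes `(p-2)(1-2β) + 2(1-β) - k = 0`, i.e.
`D_p u = 0`. As `∇u` is an eigenvector for the largest eigenvalue, `Δ_p u = |∇u|^(p-2) D_p u = 0`.
-/

open scoped RealInnerProductSpace InnerProduct Topology
open ContinuousLinearMap

section Hessian

variable {n : ℕ}

theorem quadForm_smul (A : Matrix (Fin n) (Fin n) ℝ) (c : ℝ) (z : EuclideanSpace ℝ (Fin n)) :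
    quadForm A (c • z) = c ^ 2 * quadForm A z := by
  simp only [quadForm, PiLp.smul_apply, smul_eq_mul, Finset.mul_sum]
  exact Finset.sum_congr rfl fun _ _ => Finset.sum_congr rfl fun _ _ => by ring

theorem quadForm_hess (u : EuclideanSpace ℝ (Fin n) → ℝ) (x z : EuclideanSpace ℝ (Fin n)) :
    quadForm (hess u x) z = fderiv ℝ (fderiv ℝ u) x z z := by
  conv_rhs => rw [← (EuclideanSpace.basisFun (Fin n) ℝ).sum_repr z]
  simp only [quadForm, hess, Matrix.of_apply, iteratedFDeriv_two_apply, map_sum, map_smul,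
    FunLike.coe_sum, FunLike.coe_smul, Finset.sum_apply,
    Pi.smul_apply, smul_eq_mul, EuclideanSpace.basisFun_apply, EuclideanSpace.basisFun_repr,
    Matrix.cons_val_zero, Matrix.cons_val_one, Finset.mul_sum]
  rw [Finset.sum_comm]
  exact Finset.sum_congr rfl fun _ _ => Finset.sum_congr rfl fun _ _ => by ring

theorem lapl_eq_sum (u : EuclideanSpace ℝ (Fin n) → ℝ) (x : EuclideanSpace ℝ (Fin n)) :
    lapl u x = ∑ i, fderiv ℝ (fderiv ℝ u) x (EuclideanSpace.basisFun (Fin n) ℝ i)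
      (EuclideanSpace.basisFun (Fin n) ℝ i) := by
  simp [lapl, hess, iteratedFDeriv_two_apply]

theorem lamMax_eq_of_le {A : Matrix (Fin n) (Fin n) ℝ} {c : ℝ}
    (hle : ∀ z : EuclideanSpace ℝ (Fin n), ‖z‖ = 1 → quadForm A z ≤ c)
    {z₀ : EuclideanSpace ℝ (Fin n)} (hz₀ : ‖z₀‖ = 1) (hc : quadForm A z₀ = c) : lamMax A = c :=
  IsGreatest.csSup_eq ⟨⟨z₀, hz₀, hc.symm⟩, by rintro _ ⟨z, hz, rfl⟩; exact hle z hz⟩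

end Hessian

theorem DeltaOp_eq_zero_of_Dop_eq_zero {n : ℕ} {p : ℝ≥0∞} (hp : 2 ≤ p)
    {u : EuclideanSpace ℝ (Fin n) → ℝ} {x : EuclideanSpace ℝ (Fin n)} (hD : Dop p u x = 0)
    (hgrad : quadForm (hess u x) (gradient u x) = ‖gradient u x‖ ^ 2 * lamMax (hess u x)) :
    DeltaOp p u x = 0 := by
  unfold Dop at hD
  unfold DeltaOp
  split_ifs at hD ⊢ with hpt
  · rw [hgrad, hD, mul_zero]
  have hp2 : 2 ≤ p.toReal := by
    simpa using ENNReal.toReal_mono hpt hp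
  rw [hgrad]
  obtain hN | hN := (norm_nonneg (gradient u x)).eq_or_lt
  -- at a critical point `0 ^ (p - 2) = 1` when `p = 2`; then `D_p u = Δu` vanishes instead
  · rw [← hN]
    obtain hp2 | hp2 := hp2.eq_or_lt
    · rw [← hp2] at hD ⊢
      simpa using hD
    · simp [Real.zero_rpow (by linarith : p.toReal - 2 ≠ 0)]
  · have hpow : ‖gradient u x‖ ^ (p.toReal - 4) * ‖gradient u x‖ ^ 2
        = ‖gradient u x‖ ^ (p.toReal - 2) := by
      rw [← Real.rpow_natCast, ← Real.rpow_add hN]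
      ring_nf
    linear_combination ‖gradient u x‖ ^ (p.toReal - 2) * hD
      + (p.toReal - 2) * lamMax (hess u x) * hpow

section Profile

noncomputable def fundExponent (p : ℝ≥0∞) (k : ℕ) : ℝ :=
  if p = ⊤ then 1 / 2 else (p.toReal - k) / (2 * (p.toReal - 1))

variable {p : ℝ≥0∞}

theorem one_lt_toReal_of_two_le (hp : 2 ≤ p) (hpt : p ≠ ⊤) : 1 < p.toReal := by
  have := ENNReal.toReal_mono hpt hp
  simp only [ENNReal.toReal_ofNat] at this
  linarith

theorem fundExponent_le_half (hp : 2 ≤ p) {k : ℕ} (hk : 1 ≤ k) : fundExponent p k ≤ 1 / 2 := by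
  unfold fundExponent
  split_ifs with hpt
  · rfl
  have hp1 := one_lt_toReal_of_two_le hp hpt
  have hk' : (1 : ℝ) ≤ k := by exact_mod_cast hk
  rw [div_le_iff₀ (by linarith)]
  linarith

variable (k : ℕ)

theorem fundExponent_balance (hp : 2 ≤ p) (hpt : p ≠ ⊤) :
    (p.toReal - 2) * (1 - 2 * fundExponent p k) + (2 * (1 - fundExponent p k) - k) = 0 := by
  have hp1 : p.toReal - 1 ≠ 0 := (sub_pos.mpr (one_lt_toReal_of_two_le hp hpt)).ne'
  rw [fundExponent, if_neg hpt]
  field_simp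
  ring

theorem hasDerivAt_Wfun (hp : 2 ≤ p) {r : ℝ} (hr : 0 < r) :
    HasDerivAt (Wfun p k) (-r ^ (2 * fundExponent p k - 1)) r := by
  unfold Wfun fundExponent
  by_cases hpt : p = ⊤
  · simpa [hpt] using hasDerivAt_neg' (x := r)
  have hp1 : p.toReal - 1 ≠ 0 := (sub_pos.mpr (one_lt_toReal_of_two_le hp hpt)).ne'
  by_cases hk1 : k = 1
  · have : 2 * ((p.toReal - 1) / (2 * (p.toReal - 1))) - 1 = 0 := by field_simp; ring
    simpa [hpt, hk1, this] using hasDerivAt_neg' (x := r)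
  by_cases hpk : p.toReal = k
  · have : 2 * ((p.toReal - k) / (2 * (p.toReal - 1))) - 1 = -1 := by rw [hpk]; ring
    simpa [hpt, hk1, hpk, this, Real.rpow_neg_one] using (Real.hasDerivAt_log hr.ne').fun_neg
  have hpk' : p.toReal - k ≠ 0 := sub_ne_zero.mpr hpk
  simp only [hpt, hk1, hpk, or_self, if_false]
  refine ((Real.hasDerivAt_rpow_const (p := (p.toReal - k) / (p.toReal - 1))
    (Or.inl hr.ne')).const_mul (-((p.toReal - 1) / (p.toReal - k)))).congr_deriv ?_
  field_simp

theorem hasDerivAt_Wfun_sqrt (hp : 2 ≤ p) {t : ℝ} (ht : 0 < t) :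
    HasDerivAt (fun s => Wfun p k (√s)) (-(1 / 2) * t ^ (fundExponent p k - 1)) t := by
  have hst : 0 < √t := Real.sqrt_pos.mpr ht
  refine ((hasDerivAt_Wfun k hp hst).comp t (Real.hasDerivAt_sqrt ht.ne')).congr_deriv ?_
  have hsplit : √t ^ (2 * fundExponent p k - 1) = t ^ (fundExponent p k - 1) * √t := by
    rw [show 2 * fundExponent p k - 1 = 2 * (fundExponent p k - 1) + 1 by ring,
      Real.rpow_add hst, Real.rpow_one, Real.rpow_mul hst.le, Real.rpow_two, Real.sq_sqrt ht.le]
  rw [hsplit]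
  field_simp

end Profile

section SquaredNorm

variable {E F : Type*} [NormedAddCommGroup E] [InnerProductSpace ℝ E]
  [NormedAddCommGroup F] [InnerProductSpace ℝ F] {g : ℝ → ℝ} {C β : ℝ} (L : E →L[ℝ] F) (x₀ : E)

theorem hasFDerivAt_apply_sub (x : E) : HasFDerivAt (fun x => L (x - x₀)) L x :=
  (L.hasFDerivAt.comp x ((hasFDerivAt_id x).sub_const x₀)).congr_fderiv (by simp)

def cylindrical (g : ℝ → ℝ) (L : E →L[ℝ] F) (x₀ x : E) : ℝ :=
  g (‖L (x - x₀)‖ ^ 2)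

theorem hasFDerivAt_cylindrical (hg : ∀ t, 0 < t → HasDerivAt g (-(C / 2) * t ^ (β - 1)) t)
    {x : E} (hx : L (x - x₀) ≠ 0) :
    HasFDerivAt (cylindrical g L x₀)
      ((-(C * (‖L (x - x₀)‖ ^ 2) ^ (β - 1))) • (innerSL ℝ (L (x - x₀))).comp L) x := by
  have hq := (hasFDerivAt_apply_sub L x₀ x).norm_sq
  refine ((hg _ (by positivity)).comp_hasFDerivAt x hq).congr_fderiv ?_
  ext v
  simp only [_root_.smul_apply, ContinuousLinearMap.comp_apply, smul_eq_mul,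
    nsmul_eq_mul, innerSL_apply_apply]
  ring

theorem fderiv_fderiv_cylindrical_apply
    (hg : ∀ t, 0 < t → HasDerivAt g (-(C / 2) * t ^ (β - 1)) t)
    {x : E} (hx : L (x - x₀) ≠ 0) (v : E) :
    fderiv ℝ (fderiv ℝ (cylindrical g L x₀)) x v v =
      2 * C * (1 - β) * (‖L (x - x₀)‖ ^ 2) ^ (β - 2) * ⟪L (x - x₀), L v⟫ ^ 2
        - C * (‖L (x - x₀)‖ ^ 2) ^ (β - 1) * ‖L v‖ ^ 2 := by
  have hev : fderiv ℝ (cylindrical g L x₀) =ᶠ[𝓝 x] fun x =>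
      (-(C * (‖L (x - x₀)‖ ^ 2) ^ (β - 1))) • (innerSL ℝ (L (x - x₀))).comp L := by
    have hopen : IsOpen {x | L (x - x₀) ≠ 0} :=
      isOpen_ne_fun (by fun_prop) continuous_const
    filter_upwards [hopen.mem_nhds hx] with x hx
    exact (hasFDerivAt_cylindrical L x₀ hg hx).fderiv
  have hy := hasFDerivAt_apply_sub L x₀ x
  have hscalar :=
    ((hy.norm_sq.rpow_const (p := β - 1) (Or.inl (by positivity))).const_mul C).fun_neg
  have hinner := (((innerSL ℝ).hasFDerivAt.comp x hy).clm_comp (hasFDerivAt_const L x))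
  have hG : HasFDerivAt (fun x =>
      (-(C * (‖L (x - x₀)‖ ^ 2) ^ (β - 1))) • (innerSL ℝ (L (x - x₀))).comp L) _ x :=
    hscalar.smul hinner
  rw [hev.fderiv_eq, hG.fderiv]
  simp only [_root_.add_apply, _root_.smul_apply,
    ContinuousLinearMap.smulRight_apply, ContinuousLinearMap.comp_apply,
    _root_.neg_apply, ContinuousLinearMap.compL_apply,
    ContinuousLinearMap.flip_apply, _root_.zero_apply, innerSL_apply_apply,
    smul_eq_mul, nsmul_eq_mul]
  rw [show β - 1 - 1 = β - 2 by ring]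
  simp only [Function.comp_apply, innerSL_apply_apply ℝ, inner_zero_right,
    real_inner_self_eq_norm_sq, Nat.cast_ofNat]
  ring

end SquaredNorm

section Coisometry

variable {E F : Type*} [NormedAddCommGroup E] [InnerProductSpace ℝ E] [CompleteSpace E]
  [NormedAddCommGroup F] [InnerProductSpace ℝ F] [CompleteSpace F] {L : E →L[ℝ] F}

theorem norm_adjoint_apply_of_comp_adjoint_eq_id (hL : L ∘L L† = .id ℝ F) (y : F) :
    ‖(L†) y‖ = ‖y‖ := by
  have h : ‖(L†) y‖ ^ 2 = ‖y‖ ^ 2 := by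
    rw [← real_inner_self_eq_norm_sq, adjoint_inner_left, ← ContinuousLinearMap.comp_apply, hL,
      id_apply, real_inner_self_eq_norm_sq]
  exact (pow_left_inj₀ (norm_nonneg _) (norm_nonneg _) two_ne_zero).mp h

theorem norm_apply_le_of_comp_adjoint_eq_id (hL : L ∘L L† = .id ℝ F) (v : E) : ‖L v‖ ≤ ‖v‖ := by
  have hnorm : ‖L‖ ≤ 1 := by
    rw [← LinearIsometryEquiv.norm_map adjoint L]
    exact opNorm_le_bound _ zero_le_one fun y => by
      rw [norm_adjoint_apply_of_comp_adjoint_eq_id hL, one_mul]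
  simpa using L.le_of_opNorm_le hnorm v

theorem sum_norm_sq_apply_eq_finrank [FiniteDimensional ℝ F] {ι : Type*} [Fintype ι]
    (hL : L ∘L L† = .id ℝ F) (b : OrthonormalBasis ι ℝ E) :
    ∑ i, ‖L (b i)‖ ^ 2 = Module.finrank ℝ F := by
  have hF : FiniteDimensional ℝ E := b.toBasis.finiteDimensional_of_finite
  calc ∑ i, ‖L (b i)‖ ^ 2 = LinearMap.trace ℝ E ((L† ∘L L : E →L[ℝ] E) : E →ₗ[ℝ] E) := by
        rw [LinearMap.trace_eq_sum_inner _ b]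
        simp [adjoint_inner_right]
    _ = LinearMap.trace ℝ F ((L ∘L L† : F →L[ℝ] F) : F →ₗ[ℝ] F) :=
        LinearMap.trace_comp_comm' (L : E →ₗ[ℝ] F) (L† : F →ₗ[ℝ] E)
    _ = Module.finrank ℝ F := by rw [hL]; exact LinearMap.trace_id ℝ F

end Coisometry

section CylindricalHessian

variable {n : ℕ} {F : Type*} [NormedAddCommGroup F] [InnerProductSpace ℝ F]
  [FiniteDimensional ℝ F] {g : ℝ → ℝ} {C β : ℝ} {L : EuclideanSpace ℝ (Fin n) →L[ℝ] F}
  {x₀ x : EuclideanSpace ℝ (Fin n)}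

theorem gradient_cylindrical (hg : ∀ t, 0 < t → HasDerivAt g (-(C / 2) * t ^ (β - 1)) t)
    (hx : L (x - x₀) ≠ 0) :
    gradient (cylindrical g L x₀) x
      = (-(C * (‖L (x - x₀)‖ ^ 2) ^ (β - 1))) • (L†) (L (x - x₀)) := by
  refine (hasGradientAt_iff_hasFDerivAt.mpr ?_).gradient
  refine (hasFDerivAt_cylindrical L x₀ hg hx).congr_fderiv ?_
  ext v
  simp [adjoint_inner_left]

theorem quadForm_hess_cylindrical (hg : ∀ t, 0 < t → HasDerivAt g (-(C / 2) * t ^ (β - 1)) t)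
    (hx : L (x - x₀) ≠ 0) (z : EuclideanSpace ℝ (Fin n)) :
    quadForm (hess (cylindrical g L x₀) x) z = C * (‖L (x - x₀)‖ ^ 2) ^ (β - 1)
      * (2 * (1 - β) * (⟪(L†) (L (x - x₀)), z⟫ ^ 2 / ‖L (x - x₀)‖ ^ 2) - ‖L z‖ ^ 2) := by
  have hs : 0 < ‖L (x - x₀)‖ ^ 2 := by positivity
  rw [quadForm_hess, fderiv_fderiv_cylindrical_apply L x₀ hg hx, adjoint_inner_left,
    show β - 2 = β - 1 - 1 by ring, Real.rpow_sub_one hs.ne']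
  ring

theorem lamMax_hess_cylindrical (hL : L ∘L L† = .id ℝ F)
    (hg : ∀ t, 0 < t → HasDerivAt g (-(C / 2) * t ^ (β - 1)) t) (hC : 0 ≤ C) (hβ : β ≤ 1 / 2)
    (hx : L (x - x₀) ≠ 0) :
    lamMax (hess (cylindrical g L x₀) x) = C * (‖L (x - x₀)‖ ^ 2) ^ (β - 1) * (1 - 2 * β) := by
  set y := L (x - x₀) with hy
  have hs : 0 < ‖y‖ ^ 2 := by positivity
  have hw : ‖(L†) y‖ = ‖y‖ := norm_adjoint_apply_of_comp_adjoint_eq_id hL y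
  have hc : 0 ≤ C * (‖y‖ ^ 2) ^ (β - 1) := mul_nonneg hC (by positivity)
  refine lamMax_eq_of_le (fun z hz => ?_) (z₀ := ‖y‖⁻¹ • (L†) y) ?_ ?_
  · rw [quadForm_hess_cylindrical hg hx, ← hy]
    have hLz : ‖L z‖ ≤ 1 := hz ▸ norm_apply_le_of_comp_adjoint_eq_id hL z
    have hcs : ⟪(L†) y, z⟫ ^ 2 / ‖y‖ ^ 2 ≤ ‖L z‖ ^ 2 := by
      rw [div_le_iff₀ hs, adjoint_inner_left, mul_comm, ← mul_pow]
      exact (sq_abs _).symm.trans_le (pow_le_pow_left₀ (abs_nonneg _) (abs_real_inner_le_norm _ _) 2)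
    have hLz2 : ‖L z‖ ^ 2 ≤ 1 := pow_le_one₀ (norm_nonneg _) hLz
    have hβ' : 0 ≤ 1 - 2 * β := by linarith
    refine mul_le_mul_of_nonneg_left ?_ hc
    linarith [mul_nonneg hβ' (sub_nonneg.mpr (hcs.trans hLz2))]
  · rw [norm_smul, hw, norm_inv, norm_norm, inv_mul_cancel₀ (by positivity)]
  · rw [quadForm_hess_cylindrical hg hx, ← hy, inner_smul_right, real_inner_self_eq_norm_sq, hw,
      map_smul, ← ContinuousLinearMap.comp_apply, hL, id_apply, norm_smul, norm_inv, norm_norm,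
      inv_mul_cancel₀ (by positivity)]
    field_simp
    ring

theorem lapl_cylindrical (hL : L ∘L L† = .id ℝ F)
    (hg : ∀ t, 0 < t → HasDerivAt g (-(C / 2) * t ^ (β - 1)) t) (hx : L (x - x₀) ≠ 0) :
    lapl (cylindrical g L x₀) x
      = C * (‖L (x - x₀)‖ ^ 2) ^ (β - 1) * (2 * (1 - β) - Module.finrank ℝ F) := by
  set b := EuclideanSpace.basisFun (Fin n) ℝ
  set w := (L†) (L (x - x₀))
  have hs : 0 < ‖L (x - x₀)‖ ^ 2 := by positivity
  have hparseval : ∑ i, ⟪w, b i⟫ ^ 2 = ‖L (x - x₀)‖ ^ 2 :=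
    calc ∑ i, ⟪w, b i⟫ ^ 2 = ∑ i, ⟪w, b i⟫ * ⟪b i, w⟫ := by simp only [sq, real_inner_comm w]
      _ = ‖L (x - x₀)‖ ^ 2 := by
        rw [b.sum_inner_mul_inner, real_inner_self_eq_norm_sq,
          norm_adjoint_apply_of_comp_adjoint_eq_id hL]
  rw [lapl_eq_sum]
  simp only [← quadForm_hess, quadForm_hess_cylindrical hg hx]
  rw [← Finset.mul_sum, Finset.sum_sub_distrib, ← Finset.mul_sum, ← Finset.sum_div, hparseval,
    div_self hs.ne', sum_norm_sq_apply_eq_finrank hL b, mul_one]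

theorem quadForm_hess_gradient_cylindrical (hL : L ∘L L† = .id ℝ F)
    (hg : ∀ t, 0 < t → HasDerivAt g (-(C / 2) * t ^ (β - 1)) t) (hC : 0 ≤ C) (hβ : β ≤ 1 / 2)
    (hx : L (x - x₀) ≠ 0) :
    quadForm (hess (cylindrical g L x₀) x) (gradient (cylindrical g L x₀) x)
      = ‖gradient (cylindrical g L x₀) x‖ ^ 2 * lamMax (hess (cylindrical g L x₀) x) := by
  have hs : 0 < ‖L (x - x₀)‖ ^ 2 := by positivity
  have hw : ‖(L†) (L (x - x₀))‖ = ‖L (x - x₀)‖ := norm_adjoint_apply_of_comp_adjoint_eq_id hL _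
  have hLw : L ((L†) (L (x - x₀))) = L (x - x₀) := by
    rw [← ContinuousLinearMap.comp_apply, hL, id_apply]
  rw [gradient_cylindrical hg hx, quadForm_smul, quadForm_hess_cylindrical hg hx,
    lamMax_hess_cylindrical hL hg hC hβ hx, norm_smul, real_inner_self_eq_norm_sq, hw, hLw,
    Real.norm_eq_abs, mul_pow, sq_abs]
  field_simp
  ring

end CylindricalHessian

theorem Matrix.toEuclideanLin_transpose_comp_adjoint {n k : ℕ} {Q : Matrix (Fin n) (Fin k) ℝ}
    (hQ : Qᵀ * Q = 1) :
    (toEuclideanLin Qᵀ).toContinuousLinearMap ∘L (toEuclideanLin Qᵀ).toContinuousLinearMap†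
      = .id ℝ _ := by
  rw [← LinearMap.adjoint_toContinuousLinearMap, ← toEuclideanLin_conjTranspose_eq_adjoint,
    conjTranspose_eq_transpose_of_trivial, transpose_transpose]
  ext1 y
  simp [← LinearMap.comp_apply, ← toLpLin_mul_same, hQ]

theorem Dop_cylindrical_eq_zero {n k : ℕ} {p : ℝ≥0∞} (hp : 2 ≤ p) (hk : 1 ≤ k) {F : Type*}
    [NormedAddCommGroup F] [InnerProductSpace ℝ F] [FiniteDimensional ℝ F]
    (hF : Module.finrank ℝ F = k) {L : EuclideanSpace ℝ (Fin n) →L[ℝ] F}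
    (hL : L ∘L L† = .id ℝ F) {g : ℝ → ℝ} {C : ℝ} (hC : 0 ≤ C)
    (hg : ∀ t, 0 < t → HasDerivAt g (-(C / 2) * t ^ (fundExponent p k - 1)) t)
    {x₀ x : EuclideanSpace ℝ (Fin n)} (hx : L (x - x₀) ≠ 0) :
    Dop p (cylindrical g L x₀) x = 0 := by
  rw [Dop, lamMax_hess_cylindrical hL hg hC (fundExponent_le_half hp hk) hx,
    lapl_cylindrical hL hg hx, hF]
  split_ifs with hpt
  · simp [fundExponent, hpt]
  · linear_combination C * (‖L (x - x₀)‖ ^ 2) ^ (fundExponent p k - 1)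
      * fundExponent_balance k hp hpt

theorem stmt_4_general {n k : ℕ} (hk1 : 1 ≤ k)
    (p : ℝ≥0∞) (hp : 2 ≤ p)
    (Q : Matrix (Fin n) (Fin k) ℝ) (hQ : Qᵀ * Q = 1)
    (x₀ : EuclideanSpace ℝ (Fin n))
    (C₁ C₂ : ℝ) (hC₁ : 0 ≤ C₁)
    (u : EuclideanSpace ℝ (Fin n) → ℝ)
    (hu : ∀ x, u x = C₁ * Wfun p k (enorm' (Qᵀ.mulVec fun i => x i - x₀ i)) + C₂) :
    ∀ x : EuclideanSpace ℝ (Fin n), (Qᵀ.mulVec fun i => x i - x₀ i) ≠ 0 →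
      Dop p u x = 0 ∧ DeltaOp p u x = 0 := by
  intro x hx
  set L := (Matrix.toEuclideanLin Qᵀ).toContinuousLinearMap
  have hL := Matrix.toEuclideanLin_transpose_comp_adjoint hQ
  have hLx : ∀ x, L (x - x₀) = WithLp.toLp 2 (Qᵀ.mulVec fun i => x i - x₀ i) := fun _ => rfl
  have hcyl : u = cylindrical (fun s => C₁ * Wfun p k √s + C₂) L x₀ := by
    funext x
    rw [hu, cylindrical, Real.sqrt_sq (norm_nonneg _), hLx, EuclideanSpace.norm_eq]
    simp [enorm']
  have hg : ∀ t, 0 < t → HasDerivAt (fun s => C₁ * Wfun p k √s + C₂)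
      (-(C₁ / 2) * t ^ (fundExponent p k - 1)) t := fun t ht =>
    (((hasDerivAt_Wfun_sqrt k hp ht).const_mul C₁).add_const C₂).congr_deriv (by ring)
  have hx' : L (x - x₀) ≠ 0 := by rwa [hLx, ne_eq, WithLp.toLp_eq_zero]
  have hD : Dop p u x = 0 :=
    hcyl ▸ Dop_cylindrical_eq_zero hp hk1 finrank_euclideanSpace_fin hL hC₁ hg hx'
  refine ⟨hD, DeltaOp_eq_zero_of_Dop_eq_zero hp hD ?_⟩
  rw [hcyl]
  exact quadForm_hess_gradient_cylindrical hL hg hC₁ (fundExponent_le_half hp hk1) hx'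

/-- Cylindrical fundamental solutions are dominative p-harmonic. -/
theorem stmt_4 {n k : ℕ} (hn : 2 ≤ n) (hk1 : 1 ≤ k) (hkn : k ≤ n)
    (p : ℝ≥0∞) (hp : 2 ≤ p)
    (Q : Matrix (Fin n) (Fin k) ℝ) (hQ : Qᵀ * Q = 1)
    (x₀ : EuclideanSpace ℝ (Fin n))
    (C₁ C₂ : ℝ) (hC₁ : 0 ≤ C₁)
    (u : EuclideanSpace ℝ (Fin n) → ℝ)
    (hu : ∀ x, u x = C₁ * Wfun p k (enorm' (Qᵀ.mulVec fun i => x i - x₀ i)) + C₂) :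
    ∀ x : EuclideanSpace ℝ (Fin n), (Qᵀ.mulVec fun i => x i - x₀ i) ≠ 0 →
      Dop p u x = 0 ∧ DeltaOp p u x = 0 :=
  stmt_4_general hk1 p hp Q hQ x₀ C₁ C₂ hC₁ u hu
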